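/- For every real z: Σ_{k=1}^∞ k²·J_{4k}(z) = (z/64)·(z − sin z). -/

import Mathlib

/-!
`J_n(z)` is the `n`-th Fourier coefficient on `[0, 2π]` of `g(θ) = exp(i z sin θ)`, so the smooth
periodic function `g''` has the Fourier coefficients `-n² J_n(z)`. These are `O(n⁻²)` (integrate
by parts twice more against the bounded `g''''`), so `g''` equals its Fourier series pointwise.
Summing that series over the four points `θ = jπ/2` kills every term with `4 ∤ n`, and
`J_{-n} = J_n` for even `n` folds what remains onto `n = 4k`, `k ≥ 1`:
`∑_{j<4} g''(jπ/2) = -128 ∑_{k≥1} k² J_{4k}(z)`. The left side is `-2z(z - sin z)`.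
-/

open scoped Real

/-- Bessel function of the first kind of integer order `m`,
defined by `J_m(z) = (1/2π) ∫_0^{2π} e^{i z sin θ - i m θ} dθ`. -/
noncomputable def besselJ (m : ℤ) (z : ℂ) : ℂ :=
  (1 / (2 * Real.pi)) * ∫ θ in (0:ℝ)..(2 * Real.pi),
    Complex.exp (z * Complex.sin (θ:ℂ) * Complex.I - (m:ℂ) * (θ:ℂ) * Complex.I)

open Complex Function MeasureTheory
open scoped ContDiff

theorem sum_range_fourier_coe_mul_div {T : ℝ} (hT : T ≠ 0) {N : ℕ} (hN : N ≠ 0) (n : ℤ) :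
    ∑ j ∈ Finset.range N, fourier n ((j * T / N : ℝ) : AddCircle T) =
      if (N : ℤ) ∣ n then (N : ℂ) else 0 := by
  have hζ := Complex.isPrimitiveRoot_exp N hN
  have hterm (j : ℕ) : fourier n ((j * T / N : ℝ) : AddCircle T) =
      (cexp (2 * π * I / N) ^ n) ^ j := by
    rw [fourier_coe_apply, ← exp_int_mul, ← exp_nat_mul]
    congr 1
    have : (T : ℂ) ≠ 0 := ofReal_ne_zero.mpr hT
    push_cast
    field_simp
  simp only [hterm]
  split_ifs with hdvd
  · simp [(hζ.zpow_eq_one_iff_dvd n).mpr hdvd]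
  · have hne : cexp (2 * π * I / N) ^ n ≠ 1 := mt (hζ.zpow_eq_one_iff_dvd n).mp hdvd
    rw [geom_sum_eq hne, ← zpow_natCast, ← zpow_mul, mul_comm n, zpow_mul, zpow_natCast,
      hζ.pow_eq_one, one_zpow, sub_self, zero_div]

section FourierCoeffOn

variable {a b : ℝ} (hab : a < b) {u : ℝ → ℂ}

theorem Function.Periodic.iteratedDeriv {p : ℝ} (hu : Periodic u p) (k : ℕ) :
    Periodic (iteratedDeriv k u) p := fun x => by
  simpa only [funext hu] using congrFun (iteratedDeriv_comp_add_const k u p) x |>.symm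

theorem AddCircle.liftIoc_coe_apply_of_periodic {p : ℝ} [Fact (0 < p)] (hu : Periodic u p)
    (x : ℝ) : AddCircle.liftIoc p a u x = u x := by
  have hp : 0 < p := Fact.out
  have hcoe : ((toIocMod hp a x : ℝ) : AddCircle p) = x := by
    rw [← self_sub_toIocDiv_zsmul, QuotientAddGroup.mk_sub, QuotientAddGroup.mk_zsmul,
      AddCircle.coe_period, zsmul_zero, sub_zero]
  rw [← hcoe, AddCircle.liftIoc_coe_apply (toIocMod_mem_Ioc hp a x), ← self_sub_toIocDiv_zsmul,
    hu.sub_zsmul_eq]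

theorem fourierCoeffOn_deriv (hu : Differentiable ℝ u)
    (hu' : IntervalIntegrable (deriv u) volume a b) (hper : u b = u a) (n : ℤ) :
    fourierCoeffOn hab (deriv u) n = 2 * π * I * n / (b - a) * fourierCoeffOn hab u n := by
  have hba : ((b - a : ℝ) : ℂ) ≠ 0 := ofReal_ne_zero.mpr (sub_pos.mpr hab).ne'
  rcases eq_or_ne n 0 with rfl | hn
  · rw [fourierCoeffOn_eq_integral]
    simp only [neg_zero, fourier_zero, one_smul, Int.cast_zero, mul_zero, zero_div, zero_mul]
    rw [intervalIntegral.integral_eq_sub_of_hasDerivAt (fun x _ => (hu x).hasDerivAt) hu',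
      hper, sub_self, smul_zero]
  · rw [fourierCoeffOn_of_hasDerivAt hab hn (fun x _ => (hu x).hasDerivAt) hu', hper, sub_self,
      mul_zero, zero_sub]
    have : (n : ℂ) ≠ 0 := Int.cast_ne_zero.mpr hn
    push_cast at hba ⊢
    field_simp

theorem fourierCoeffOn_iteratedDeriv {k : ℕ} (hu : ContDiff ℝ k u) (hper : Periodic u (b - a))
    (n : ℤ) : fourierCoeffOn hab (iteratedDeriv k u) n =
      (2 * π * I * n / (b - a)) ^ k * fourierCoeffOn hab u n := by
  induction k with
  | zero => simp
  | succ k ih =>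
    have hk : ContDiff ℝ k u := hu.of_le (by norm_cast; omega)
    have hdiff : Differentiable ℝ (iteratedDeriv k u) :=
      hu.differentiable_iteratedDeriv k (by norm_cast; omega)
    have hcont : Continuous (deriv (iteratedDeriv k u)) := by
      rw [← iteratedDeriv_succ]; exact hu.continuous_iteratedDeriv _ le_rfl
    have hend : iteratedDeriv k u b = iteratedDeriv k u a := by
      simpa using hper.iteratedDeriv k a
    rw [iteratedDeriv_succ, fourierCoeffOn_deriv hab hdiff (hcont.intervalIntegrable a b) hend,
      ih hk]
    ring

theorem norm_fourierCoeffOn_le {E : Type*} [NormedAddCommGroup E] [NormedSpace ℂ E] {v : ℝ → E}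
    {M : ℝ} (hv : ∀ x ∈ Set.Icc a b, ‖v x‖ ≤ M) (n : ℤ) :
    ‖fourierCoeffOn hab v n‖ ≤ M := by
  have hba : 0 < b - a := sub_pos.mpr hab
  rw [fourierCoeffOn_eq_integral, norm_smul, Real.norm_of_nonneg (by positivity)]
  have hint : ‖∫ x in a..b, fourier (-n) (x : AddCircle (b - a)) • v x‖ ≤ M * |b - a| := by
    refine intervalIntegral.norm_integral_le_of_norm_le_const fun x hx => ?_
    rw [Set.uIoc_of_le hab.le] at hx
    rw [norm_smul, fourier_apply, Circle.norm_coe, one_mul]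
    exact hv x (Set.Ioc_subset_Icc_self hx)
  calc 1 / (b - a) * ‖∫ x in a..b, fourier (-n) (x : AddCircle (b - a)) • v x‖
      ≤ 1 / (b - a) * (M * |b - a|) := by gcongr
    _ = M := by rw [abs_of_pos hba]; field_simp

theorem summable_fourierCoeffOn_of_contDiff (hu : ContDiff ℝ 2 u) (hper : Periodic u (b - a)) :
    Summable (fourierCoeffOn hab u) := by
  obtain ⟨M, hM⟩ := isCompact_Icc.exists_bound_of_continuousOn
    (hu.continuous_iteratedDeriv 2 le_rfl).continuousOn (s := Set.Icc a b)
  have hba : 0 < b - a := sub_pos.mpr hab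
  refine .of_norm_bounded_eventually
    ((Real.summable_one_div_int_pow.mpr one_lt_two).mul_left (((b - a) / (2 * π)) ^ 2 * M)) ?_
  filter_upwards [Filter.eventually_cofinite_ne 0] with n hn
  have hfactor : ‖(2 * π * I * n / (b - a) : ℂ)‖ = 2 * π * |(n : ℝ)| / (b - a) := by
    rw [norm_div, ← ofReal_sub, Complex.norm_real, Real.norm_of_nonneg hba.le]
    simp [abs_of_pos Real.pi_pos]
  have hle := norm_fourierCoeffOn_le hab hM n
  rw [fourierCoeffOn_iteratedDeriv hab hu hper n, norm_mul, norm_pow, hfactor] at hle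
  have hn' : (0 : ℝ) < (n : ℝ) ^ 2 := by positivity
  rw [mul_one_div, le_div_iff₀ hn']
  calc ‖fourierCoeffOn hab u n‖ * (n : ℝ) ^ 2
      = ((b - a) / (2 * π)) ^ 2 *
          ((2 * π * |(n : ℝ)| / (b - a)) ^ 2 * ‖fourierCoeffOn hab u n‖) := by
        field_simp
        rw [sq_abs]
    _ ≤ ((b - a) / (2 * π)) ^ 2 * M := by gcongr

theorem hasSum_fourierCoeffOn_mul_fourier (hu : Continuous u) (hper : Periodic u (b - a))
    (hsum : Summable (fourierCoeffOn hab u)) (x : ℝ) :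
    HasSum (fun n => fourierCoeffOn hab u n * fourier n (x : AddCircle (b - a))) (u x) := by
  have : Fact (0 < b - a) := ⟨sub_pos.mpr hab⟩
  let U : C(AddCircle (b - a), ℂ) :=
    ⟨AddCircle.liftIoc (b - a) a u,
      AddCircle.liftIoc_continuous (hper a).symm hu.continuousOn⟩
  have h := has_pointwise_sum_fourier_series_of_summable (f := U) hsum x
  rwa [ContinuousMap.coe_mk, AddCircle.liftIoc_coe_apply_of_periodic hper] at h

theorem hasSum_mul_fourierCoeffOn_mul (hu : Continuous u) (hper : Periodic u (b - a))
    (hsum : Summable (fourierCoeffOn hab u)) {N : ℕ} (hN : N ≠ 0) :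
    HasSum (fun m : ℤ => N * fourierCoeffOn hab u (N * m))
      (∑ j ∈ Finset.range N, u (j * (b - a) / N)) := by
  have h := hasSum_sum fun j (_ : j ∈ Finset.range N) =>
    hasSum_fourierCoeffOn_mul_fourier hab hu hper hsum (j * (b - a) / N)
  simp only [← Finset.mul_sum, sum_range_fourier_coe_mul_div (sub_pos.mpr hab).ne' hN] at h
  have hinj : Injective fun m : ℤ => (N : ℤ) * m := mul_right_injective₀ (by exact_mod_cast hN)
  rw [← hinj.hasSum_iff] at h
  · convert h using 2 with m
    simp [mul_comm]
  · intro n hn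
    rw [if_neg fun ⟨m, hm⟩ => hn ⟨m, hm.symm⟩, mul_zero]

end FourierCoeffOn

noncomputable def jacobiAnger (z : ℂ) (θ : ℝ) : ℂ := cexp (z * Real.sin θ * I)

theorem besselJ_eq_fourierCoeffOn (n : ℤ) (z : ℂ) :
    besselJ n z = fourierCoeffOn Real.two_pi_pos (jacobiAnger z) n := by
  rw [fourierCoeffOn_eq_integral, besselJ, real_smul, sub_zero]
  congr 1
  · push_cast; ring
  · refine intervalIntegral.integral_congr fun θ _ => ?_
    have : (π : ℂ) ≠ 0 := ofReal_ne_zero.mpr Real.pi_ne_zero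
    rw [fourier_coe_apply, smul_eq_mul, jacobiAnger, ← Complex.exp_add]
    congr 1
    push_cast [← ofReal_sin]
    field_simp
    ring

theorem periodic_jacobiAnger (z : ℂ) : Periodic (jacobiAnger z) (2 * π) := fun θ => by
  simp [jacobiAnger, Real.sin_add_two_pi]

theorem contDiff_jacobiAnger (z : ℂ) : ContDiff ℝ ∞ (jacobiAnger z) :=
  ((contDiff_const.mul (ofRealCLM.contDiff.comp Real.contDiff_sin)).mul contDiff_const).cexp

theorem iteratedDeriv_two_jacobiAnger (z : ℂ) (θ : ℝ) :
    iteratedDeriv 2 (jacobiAnger z) θ =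
      -(z ^ 2 * Real.cos θ ^ 2 + z * Real.sin θ * I) * jacobiAnger z θ := by
  have h1 (t : ℝ) : HasDerivAt (jacobiAnger z) (z * Real.cos t * I * jacobiAnger z t) t := by
    rw [mul_comm]
    exact (((Real.hasDerivAt_sin t).ofReal_comp.const_mul z).mul_const I).cexp
  have h2 : HasDerivAt (fun t => z * Real.cos t * I * jacobiAnger z t)
      (-(z ^ 2 * Real.cos θ ^ 2 + z * Real.sin θ * I) * jacobiAnger z θ) θ :=
    ((((Real.hasDerivAt_cos θ).ofReal_comp.const_mul z).mul_const I).mul (h1 θ)).congr_deriv <| by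
      rw [ofReal_neg]
      linear_combination (z ^ 2 * Real.cos θ ^ 2 * jacobiAnger z θ) * I_sq
  rw [iteratedDeriv_succ, iteratedDeriv_one, funext fun t => (h1 t).deriv, h2.deriv]

theorem besselJ_neg (n : ℤ) (z : ℂ) : besselJ (-n) z = (-1) ^ n * besselJ n z := by
  simp only [besselJ]
  set ψ : ℝ → ℂ := fun θ => cexp (z * Complex.sin θ * I - ((-n : ℤ) : ℂ) * θ * I)
  have hψ : Periodic ψ (2 * π) := fun θ => by
    have : ψ (θ + 2 * π) = ψ θ * cexp (n * (2 * π * I)) := by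
      simp only [ψ]
      rw [← Complex.exp_add]
      push_cast
      rw [Complex.sin_add_two_pi]
      ring_nf
    rw [this, exp_int_mul_two_pi_mul_I, mul_one]
  have hreflect (θ : ℝ) : ψ (π - θ) =
      (-1) ^ n * cexp (z * Complex.sin θ * I - (n : ℂ) * θ * I) := by
    simp only [ψ]
    rw [← exp_pi_mul_I, ← exp_int_mul, ← Complex.exp_add]
    push_cast
    rw [Complex.sin_pi_sub]
    ring_nf
  have hshift : ∫ θ in (0 : ℝ)..2 * π, ψ θ = ∫ θ in -π..π, ψ θ := by
    simpa [two_mul] using hψ.intervalIntegral_add_eq 0 (-π)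
  have hsub : ∫ θ in -π..π, ψ θ = ∫ θ in (0 : ℝ)..2 * π, ψ (π - θ) := by
    simp [intervalIntegral.integral_comp_sub_left, two_mul]
  rw [hshift, hsub]
  simp only [hreflect, intervalIntegral.integral_const_mul]
  ring

theorem fourierCoeffOn_iteratedDeriv_two_jacobiAnger (z : ℂ) (n : ℤ) :
    fourierCoeffOn Real.two_pi_pos (iteratedDeriv 2 (jacobiAnger z)) n =
      -(n ^ 2 * besselJ n z) := by
  have hper : Periodic (jacobiAnger z) (2 * π - 0) := by
    rw [sub_zero]; exact periodic_jacobiAnger z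
  have : (π : ℂ) ≠ 0 := ofReal_ne_zero.mpr Real.pi_ne_zero
  rw [fourierCoeffOn_iteratedDeriv _ (contDiff_infty.mp (contDiff_jacobiAnger z) 2) hper,
    ← besselJ_eq_fourierCoeffOn]
  push_cast
  field_simp
  rw [I_sq]
  ring

theorem sum_range_four_iteratedDeriv_two_jacobiAnger (z : ℂ) :
    ∑ j ∈ Finset.range 4, iteratedDeriv 2 (jacobiAnger z) (j * (2 * π) / 4) =
      -2 * z * (z - Complex.sin z) := by
  simp only [Finset.sum_range_succ, Finset.sum_range_zero, iteratedDeriv_two_jacobiAnger,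
    jacobiAnger]
  rw [show ((0 : ℕ) : ℝ) * (2 * π) / 4 = 0 by simp, show ((1 : ℕ) : ℝ) * (2 * π) / 4 = π / 2 by
    push_cast; ring, show ((2 : ℕ) : ℝ) * (2 * π) / 4 = π by push_cast; ring,
    show ((3 : ℕ) : ℝ) * (2 * π) / 4 = π / 2 + π by push_cast; ring]
  simp only [Real.sin_zero, Real.cos_zero, Real.sin_pi, Real.cos_pi, Real.sin_pi_div_two,
    Real.cos_pi_div_two, Real.sin_add_pi, Real.cos_add_pi, ofReal_zero, mul_zero, zero_mul,
    Complex.exp_zero]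
  rw [Complex.sin]
  push_cast
  simp only [mul_one, mul_neg, neg_mul]
  ring

theorem tsum_sq_mul_besselJ_four_mul (z : ℂ) :
    ∑' k : ℕ, ((k : ℂ) + 1) ^ 2 * besselJ (4 * (k + 1)) z = z / 64 * (z - Complex.sin z) := by
  have hu : ContDiff ℝ ∞ (iteratedDeriv 2 (jacobiAnger z)) := by
    rw [iteratedDeriv_eq_iterate]; exact (contDiff_jacobiAnger z).iterate_deriv 2
  have hper : Periodic (iteratedDeriv 2 (jacobiAnger z)) (2 * π - 0) := by
    rw [sub_zero]; exact (periodic_jacobiAnger z).iteratedDeriv 2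
  have hsamples := hasSum_mul_fourierCoeffOn_mul Real.two_pi_pos hu.continuous hper
    (summable_fourierCoeffOn_of_contDiff _ (contDiff_infty.mp hu 2) hper) (N := 4) (by norm_num)
  simp only [sub_zero, Nat.cast_ofNat, sum_range_four_iteratedDeriv_two_jacobiAnger,
    fourierCoeffOn_iteratedDeriv_two_jacobiAnger] at hsamples
  set f : ℤ → ℂ := fun m => ((4 * m : ℤ) : ℂ) ^ 2 * besselJ (4 * m) z
  have hf : HasSum f (z * (z - Complex.sin z) / 2) := by
    rw [show -2 * z * (z - Complex.sin z) = 4 * -(z * (z - Complex.sin z) / 2) by ring,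
      hasSum_mul_left_iff (by norm_num : (4 : ℂ) ≠ 0)] at hsamples
    simpa only [neg_neg] using hsamples.neg
  have heven : f.Even := fun m => by
    simp only [f, mul_neg, Int.cast_neg, neg_sq, besselJ_neg,
      Even.neg_one_zpow (⟨2 * m, by ring⟩ : Even (4 * m)), one_mul]
  have hsplit := tsum_int_eq_zero_add_two_mul_tsum_pnat heven hf.summable
  rw [hf.tsum_eq, tsum_pnat_eq_tsum_succ (f := fun k : ℕ => f k)] at hsplit
  have hterm (k : ℕ) : f (k + 1 : ℕ) = 16 * (((k : ℂ) + 1) ^ 2 * besselJ (4 * (k + 1)) z) := by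
    simp only [f]; push_cast; ring
  simp only [hterm, tsum_mul_left, f, mul_zero, Int.cast_zero, nsmul_eq_mul] at hsplit
  linear_combination (-1 / 32) * hsplit

theorem statement8 (z : ℝ) :
    (∑' k : ℕ, ((k : ℂ) + 1) ^ 2 * besselJ (4 * (k + 1)) z) =
      ((z : ℂ) / 64) * ((z - Real.sin z : ℝ) : ℂ) := by
  rw [tsum_sq_mul_besselJ_four_mul, ofReal_sub, ofReal_sin]
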